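/- For the fiberwise operators N and N̄ on a finite-dimensional real vector space V, one has N̄ ∘ N ∘ N̄ = (p+1) · N̄ on Λ^p V* ⊗ Λ^1 V*. -/
import Mathlib


open Finset

/-- Coefficients of a `(p,q)`-covector on `ℝⁿ`: a family of real coefficients indexed by a pair
of (increasing) multi-indices, i.e. subsets `I, J ⊆ {1,...,n}`. -/
abbrev Cov (n : ℕ) := Finset (Fin n) → Finset (Fin n) → ℝ

/-- `sgn i I = (-1)^(l-1)` when `i` is the `l`-th smallest element of `I`. -/
noncomputable def sgn {n : ℕ} (i : Fin n) (I : Finset (Fin n)) : ℝ :=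
  (-1 : ℝ) ^ (I.filter (fun j => j < i)).card

/-- A covector family is of bidegree `(p,q)` if it is supported on indices with
`|I| = p`, `|J| = q`. -/
def IsBidegree {n : ℕ} (p q : ℕ) (ω : Cov n) : Prop :=
  ∀ I J : Finset (Fin n), (I.card ≠ p ∨ J.card ≠ q) → ω I J = 0

/-- The swap map `J : Λᵖ V* ⊗ Λ^q V* → Λ^q V* ⊗ Λᵖ V*`,
`J(f d'x_I ⊗ d''x_J) = (-1)^{pq} f d'x_J ⊗ d''x_I`, in coefficients. -/
noncomputable def Jmap {n : ℕ} (p q : ℕ) (ω : Cov n) : Cov n :=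
  fun I K => (-1 : ℝ) ^ (p * q) * ω K I

/-- The monodromy operator `N : Λᵖ V* ⊗ Λ^q V* → Λ^{p-1} V* ⊗ Λ^{q+1} V*`,
`N(f d'x_I ⊗ d''x_J) = ∑_{i ∈ I} (-1)^{p-1} sgn(i,I) f d'x_{I∖i} ⊗ (d''x_i ∧ d''x_J)`,
written in coefficients (the extra `sgn i J'` accounts for re-ordering `d''x_i ∧ d''x_J`). -/
noncomputable def Nmap {n : ℕ} (p : ℕ) (ω : Cov n) : Cov n :=
  fun I' J' => ∑ i ∈ J', if i ∈ I' then 0 else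
    (-1 : ℝ) ^ (p - 1) * sgn i (insert i I') * sgn i J' * ω (insert i I') (J'.erase i)

/-- The conjugate monodromy operator `N̄ : Λᵖ V* ⊗ Λ^q V* → Λ^{p+1} V* ⊗ Λ^{q-1} V*`,
`N̄(f d'x_I ⊗ d''x_J) = ∑_{j ∈ J} sgn(j,J) f (d'x_I ∧ d'x_j) ⊗ d''x_{J∖j}`, in
coefficients (the factor `(-1)^p * sgn j I'` accounts for re-ordering `d'x_I ∧ d'x_j`). -/
noncomputable def Nbarmap {n : ℕ} (p : ℕ) (ω : Cov n) : Cov n :=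
  fun I' J' => ∑ j ∈ I', if j ∈ J' then 0 else
    (-1 : ℝ) ^ p * sgn j I' * sgn j (insert j J') * ω (I'.erase j) (insert j J')

lemma sgn_sq {n : ℕ} (i : Fin n) (I : Finset (Fin n)) : sgn i I * sgn i I = 1 := by
  unfold sgn; rw [← pow_add, ← two_mul, pow_mul]; norm_num

lemma sgn_singleton {n : ℕ} (i : Fin n) : sgn i {i} = 1 := by
  unfold sgn
  rw [Finset.filter_singleton]
  simp

lemma nbar_ne_empty {n p : ℕ} (ω : Cov n) (hω : IsBidegree p 1 ω)
    (I J : Finset (Fin n)) (hJ : J ≠ ∅) : Nbarmap p ω I J = 0 := by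
  unfold Nbarmap
  apply Finset.sum_eq_zero
  intro j hj
  split
  · rfl
  · rename_i hjJ
    rw [hω _ _ (Or.inr ?_), mul_zero]
    rw [Finset.card_insert_of_notMem hjJ]
    have : J.card ≠ 0 := by simpa [Finset.card_eq_zero] using hJ
    omega

lemma nbar_card {n p : ℕ} (ω : Cov n) (hω : IsBidegree p 1 ω)
    (I : Finset (Fin n)) (hI : I.card ≠ p + 1) : Nbarmap p ω I ∅ = 0 := by
  unfold Nbarmap
  apply Finset.sum_eq_zero
  intro j hj
  simp only [Finset.notMem_empty, if_false]
  rw [hω _ _ (Or.inl ?_), mul_zero]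
  rw [Finset.card_erase_of_mem hj]
  have : 0 < I.card := Finset.card_pos.mpr ⟨j, hj⟩
  omega

/-- `N̄ ∘ N ∘ N̄ = (p+1) · N̄` on `Λᵖ V* ⊗ Λ¹ V*` (Lemma 3.7, second identity). Here
`N̄ : A^{p,1} → A^{p+1,0}`, `N : A^{p+1,0} → A^{p,1}`. -/
theorem Nbar_N_Nbar (n p : ℕ) (ω : Cov n) (hω : IsBidegree p 1 ω) :
    Nbarmap p (Nmap (p + 1) (Nbarmap p ω)) = fun I J => ((p : ℝ) + 1) * Nbarmap p ω I J := by
  funext I J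
  by_cases hJ : J = ∅
  · subst hJ
    have key : ∀ k ∈ I, (if k ∈ (∅ : Finset (Fin n)) then (0:ℝ) else
        (-1:ℝ)^p * sgn k I * sgn k (insert k ∅) *
          Nmap (p+1) (Nbarmap p ω) (I.erase k) (insert k ∅))
        = Nbarmap p ω I ∅ := by
      intro k hk
      have hk' : k ∉ I.erase k := Finset.notMem_erase k I
      simp only [Finset.notMem_empty, if_false, Finset.insert_empty]
      rw [show Nmap (p+1) (Nbarmap p ω) (I.erase k) {k}
          = ∑ i ∈ ({k} : Finset (Fin n)), (if i ∈ I.erase k then (0:ℝ) else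
            (-1:ℝ)^(p+1-1) * sgn i (insert i (I.erase k)) * sgn i ({k} : Finset (Fin n)) *
              Nbarmap p ω (insert i (I.erase k)) (({k} : Finset (Fin n)).erase i)) from rfl]
      rw [Finset.sum_singleton]
      simp only [hk', if_false, Finset.erase_singleton, Nat.add_sub_cancel,
        Finset.insert_erase hk, sgn_singleton, mul_one]
      have h1 := sgn_sq k I
      have h2 : (-1:ℝ)^p * (-1:ℝ)^p = 1 := by
        rw [← pow_add, ← two_mul, pow_mul]; norm_num
      rw [show (-1:ℝ)^p * sgn k I * ((-1:ℝ)^p * sgn k I * Nbarmap p ω I ∅)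
          = ((-1:ℝ)^p * (-1:ℝ)^p) * (sgn k I * sgn k I) * Nbarmap p ω I ∅ by ring,
        h1, h2, one_mul, one_mul]
    rw [show Nbarmap p (Nmap (p+1) (Nbarmap p ω)) I ∅
        = ∑ k ∈ I, (if k ∈ (∅ : Finset (Fin n)) then (0:ℝ) else
          (-1:ℝ)^p * sgn k I * sgn k (insert k ∅) *
            Nmap (p+1) (Nbarmap p ω) (I.erase k) (insert k ∅)) from rfl]
    rw [Finset.sum_congr rfl key, Finset.sum_const, nsmul_eq_mul]
    by_cases hI : I.card = p + 1
    · rw [hI]; push_cast; ring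
    · rw [nbar_card ω hω I hI]; ring
  · rw [nbar_ne_empty ω hω I J hJ, mul_zero]
    apply Finset.sum_eq_zero
    intro k hk
    split
    · rfl
    · rename_i hkJ
      have hne : (insert k J).erase k ≠ ∅ := by
        rw [Finset.erase_insert hkJ]; exact hJ
      rw [show Nmap (p+1) (Nbarmap p ω) (I.erase k) (insert k J)
          = ∑ i ∈ insert k J, (if i ∈ I.erase k then (0:ℝ) else
            (-1:ℝ)^(p+1-1) * sgn i (insert i (I.erase k)) * sgn i (insert k J) *
              Nbarmap p ω (insert i (I.erase k)) ((insert k J).erase i)) from rfl]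
      rw [Finset.sum_eq_zero, mul_zero]
      intro i hi
      split
      · rfl
      · rw [nbar_ne_empty ω hω _ _ ?_, mul_zero]
        have h1 : (insert k J).card = J.card + 1 := Finset.card_insert_of_notMem hkJ
        have h2 : 0 < J.card := Finset.card_pos.mpr (Finset.nonempty_iff_ne_empty.mpr hJ)
        intro h
        have h3 := Finset.card_erase_of_mem hi
        rw [h] at h3
        simp only [Finset.card_empty] at h3
        omega
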